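/- arXiv:math/0301089 — 2 statements merged into one kernel-verified Lean document; each statement's English description precedes it below -/
import Mathlib

section
/- In H₁, the element c := δ₁⊗X + (1/2)δ₁²⊗Y is a Hochschild 2-cocycle: b(δ₁⊗X) = δ₁⊗δ₁⊗Y and b(δ₁²⊗Y) = -2 δ₁⊗δ₁⊗Y, hence b(c) = 0. -/
open scoped TensorProduct

/-- The Hochschild coboundary on 2-cochains of a Hopf algebra:
`b(h¹⊗h²) = 1⊗h¹⊗h² - Δh¹⊗h² + h¹⊗Δh² - h¹⊗h²⊗1`. -/
noncomputable def hochschildB2 (H : Type*) [Ring H] [Algebra ℂ H]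
    (Δ : H →ₐ[ℂ] H ⊗[ℂ] H) :
    (H ⊗[ℂ] H) →ₗ[ℂ] H ⊗[ℂ] (H ⊗[ℂ] H) :=
  TensorProduct.mk ℂ H (H ⊗[ℂ] H) 1
    - (TensorProduct.assoc ℂ H H H).toLinearMap ∘ₗ
        TensorProduct.map Δ.toLinearMap LinearMap.id
    + TensorProduct.map LinearMap.id Δ.toLinearMap
    - TensorProduct.map LinearMap.id ((TensorProduct.mk ℂ H H).flip 1)

/-- In `H₁`, the element `c = δ₁⊗X + (1/2)δ₁²⊗Y` is a Hochschild 2-cocycle: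
`b(δ₁⊗X) = δ₁⊗δ₁⊗Y`, `b(δ₁²⊗Y) = -2 δ₁⊗δ₁⊗Y`, hence `b(c) = 0`. -/
theorem c_is_hochschild_cocycle
    (H : Type*) [Ring H] [Algebra ℂ H]
    (X Y δ₁ : H)
    (Δ : H →ₐ[ℂ] H ⊗[ℂ] H)
    (hΔY : Δ Y = Y ⊗ₜ[ℂ] 1 + 1 ⊗ₜ[ℂ] Y)
    (hΔX : Δ X = X ⊗ₜ[ℂ] 1 + 1 ⊗ₜ[ℂ] X + δ₁ ⊗ₜ[ℂ] Y)
    (hΔδ₁ : Δ δ₁ = δ₁ ⊗ₜ[ℂ] 1 + 1 ⊗ₜ[ℂ] δ₁) :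
    hochschildB2 H Δ (δ₁ ⊗ₜ[ℂ] X) = δ₁ ⊗ₜ[ℂ] (δ₁ ⊗ₜ[ℂ] Y) ∧
    hochschildB2 H Δ ((δ₁ ^ 2) ⊗ₜ[ℂ] Y) = (-2 : ℂ) • (δ₁ ⊗ₜ[ℂ] (δ₁ ⊗ₜ[ℂ] Y)) ∧
    hochschildB2 H Δ (δ₁ ⊗ₜ[ℂ] X + (1 / 2 : ℂ) • ((δ₁ ^ 2) ⊗ₜ[ℂ] Y)) = 0 := by
  have hsq : Δ (δ₁ ^ 2) = (δ₁ ^ 2) ⊗ₜ[ℂ] 1 + (2:ℂ) • (δ₁ ⊗ₜ[ℂ] δ₁) + 1 ⊗ₜ[ℂ] (δ₁ ^ 2) := by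
    rw [map_pow, hΔδ₁, pow_two, add_mul, mul_add, mul_add]
    simp only [Algebra.TensorProduct.tmul_mul_tmul, mul_one, one_mul, two_smul, TensorProduct.smul_tmul',
      pow_two]
    abel
  have h1 : hochschildB2 H Δ (δ₁ ⊗ₜ[ℂ] X) = δ₁ ⊗ₜ[ℂ] (δ₁ ⊗ₜ[ℂ] Y) := by
    simp [hochschildB2, hΔX, hΔδ₁, TensorProduct.tmul_add, TensorProduct.add_tmul]
    abel
  have h2 : hochschildB2 H Δ ((δ₁ ^ 2) ⊗ₜ[ℂ] Y) = (-2 : ℂ) • (δ₁ ⊗ₜ[ℂ] (δ₁ ⊗ₜ[ℂ] Y)) := by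
    simp [hochschildB2, hΔY, hsq, TensorProduct.tmul_add, TensorProduct.add_tmul,
      TensorProduct.smul_tmul', TensorProduct.tmul_smul]
    simp only [TensorProduct.neg_tmul]
    abel
  refine ⟨h1, h2, ?_⟩
  rw [map_add, map_smul, h1, h2, smul_smul]
  norm_num
end

section
/- Let Z(z) = (2πi/6)∫_{i∞}^z η⁴ dz and let χ be the character of SL(2,ℤ) with χ([[1,1],[0,1]]) = e^{2πi/6}. Then for every γ ∈ SL(2,ℤ) one has dZ|₀γ = χ(γ) dZ, and consequently Z|₀γ = χ(γ)Z + L(γ) for a map L: SL(2,ℤ) → ℂ satisfying the crossed-homomorphism identity L(γ₁γ₂) = χ(γ₂)L(γ₁) + L(γ₂); L restricts to a group homomorphism on the commutator subgroup Γ'(1) = ker χ. -/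
open Complex

/-- `GL⁺(2,ℚ)`. -/
abbrev GQ := Matrix.GLPos (Fin 2) ℚ

/-- The underlying rational matrix of an element of `GL⁺(2,ℚ)`. -/
def matOf (g : GQ) : Matrix (Fin 2) (Fin 2) ℚ :=
  ((g : Matrix.GeneralLinearGroup (Fin 2) ℚ) : Matrix (Fin 2) (Fin 2) ℚ)

/-- The Möbius action `γ·z = (az+b)/(cz+d)` of `GL⁺(2,ℚ)` on the upper half-plane. -/
noncomputable def moeb (g : GQ) (z : ℂ) : ℂ :=
  ((matOf g 0 0 : ℚ) * z + (matOf g 0 1 : ℚ)) /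
    ((matOf g 1 0 : ℚ) * z + (matOf g 1 1 : ℚ))

/-- The automorphy factor `j(γ,z) = cz+d`. -/
noncomputable def jfac (g : GQ) (z : ℂ) : ℂ :=
  (matOf g 1 0 : ℚ) * z + (matOf g 1 1 : ℚ)

/-- The weight-`k` slash action `(f|ₖγ)(z) = det(γ)^{k/2} f(γ·z) (cz+d)^{-k}`. -/
noncomputable def slashf (k : ℤ) (g : GQ) (f : ℂ → ℂ) : ℂ → ℂ :=
  fun z => (((matOf g).det : ℂ)) ^ ((k : ℂ) / 2) * f (moeb g z) * jfac g z ^ (-k)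

/-- The Dedekind eta function. -/
noncomputable def dedekindEta (z : ℂ) : ℂ :=
  Complex.exp ((Real.pi : ℂ) * Complex.I * z / 12) *
    ∏' n : ℕ, (1 - Complex.exp (2 * (Real.pi : ℂ) * Complex.I * ((n : ℂ) + 1) * z))

/-- The cocycle `μ_γ = (1/2πi) d/dz log(η⁴∘γ / η⁴)`. -/
noncomputable def muC (g : GQ) : ℂ → ℂ :=
  fun z => (1 / (2 * (Real.pi : ℂ) * Complex.I)) *
    logDeriv (fun w => dedekindEta (moeb g w) ^ 4 / dedekindEta w ^ 4) z

/-- `g₂* = (1/2πi) d/dz log η⁴`. -/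
noncomputable def g2star : ℂ → ℂ :=
  fun z => (1 / (2 * (Real.pi : ℂ) * Complex.I)) * logDeriv (fun w => dedekindEta w ^ 4) z

/-- The Ramanujan operator `X = (1/2πi) d/dz - g₂*·Y` on forms of weight `k`
(where `Y` acts as `k/2`). -/
noncomputable def Xw (k : ℤ) (f : ℂ → ℂ) : ℂ → ℂ :=
  fun z => (1 / (2 * (Real.pi : ℂ) * Complex.I)) * deriv f z
    - ((k : ℂ) / 2) * g2star z * f z

/-- `ω₄ = X(g₂*) + (1/2)(g₂*)²`. -/
noncomputable def omega4 : ℂ → ℂ :=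
  fun z => Xw 2 g2star z + (1 / 2) * g2star z ^ 2

/-- The Möbius action of `SL(2,ℤ)`. -/
noncomputable def moebZ (γ : Matrix.SpecialLinearGroup (Fin 2) ℤ) (z : ℂ) : ℂ :=
  (((γ : Matrix (Fin 2) (Fin 2) ℤ) 0 0 : ℂ) * z
      + ((γ : Matrix (Fin 2) (Fin 2) ℤ) 0 1 : ℂ)) /
    (((γ : Matrix (Fin 2) (Fin 2) ℤ) 1 0 : ℂ) * z
      + ((γ : Matrix (Fin 2) (Fin 2) ℤ) 1 1 : ℂ))

/-- The automorphy factor for `SL(2,ℤ)`. -/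
noncomputable def jZ (γ : Matrix.SpecialLinearGroup (Fin 2) ℤ) (z : ℂ) : ℂ :=
  ((γ : Matrix (Fin 2) (Fin 2) ℤ) 1 0 : ℂ) * z
    + ((γ : Matrix (Fin 2) (Fin 2) ℤ) 1 1 : ℂ)

/-!
The Möbius map `z ↦ γz` has derivative `j(γ,z)⁻²`, so by the chain rule the weight-2
transformation law of `η⁴` says exactly that `(Z ∘ γ)' = χ(γ) Z'` on the upper half-plane.
The half-plane is connected, hence `Z ∘ γ - χ(γ) Z` is a constant `L(γ)`. Expanding
`Z((γ₁γ₂)z) = Z(γ₁(γ₂z))` in the two possible ways gives the crossed-homomorphism identity,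
which on `ker χ` reduces to additivity.
-/

open UpperHalfPlane

section MoebiusSL

variable (γ : Matrix.SpecialLinearGroup (Fin 2) ℤ) (τ : ℍ)

lemma moebZ_coe : moebZ γ τ = ↑(γ • τ) := by
  rw [coe_specialLinearGroup_apply]
  simp [moebZ]

lemma jZ_coe : jZ γ τ = denom γ τ := by
  simp [jZ, denom]

lemma jZ_ne_zero : jZ γ τ ≠ 0 := jZ_coe γ τ ▸ denom_ne_zero _ τ

lemma hasDerivAt_moebZ : HasDerivAt (moebZ γ) (jZ γ τ ^ 2)⁻¹ τ := by
  have hdet := congrArg (Int.cast : ℤ → ℂ) ((Matrix.det_fin_two _).symm.trans γ.det_coe)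
  push_cast at hdet
  set a : ℂ := ((γ 0 0 : ℤ) : ℂ)
  set b : ℂ := ((γ 0 1 : ℤ) : ℂ)
  set c : ℂ := ((γ 1 0 : ℤ) : ℂ)
  set d : ℂ := ((γ 1 1 : ℤ) : ℂ)
  have h := ((hasDerivAt_id' (τ : ℂ)).const_mul a |>.add_const b).div
    ((hasDerivAt_id' (τ : ℂ)).const_mul c |>.add_const d) (jZ_ne_zero γ τ)
  rw [show a * 1 * (c * τ + d) - (a * τ + b) * (c * 1) = 1 by linear_combination hdet,
    one_div] at h
  exact h

lemma im_moebZ_pos : 0 < (moebZ γ τ).im := moebZ_coe γ τ ▸ (γ • τ).im_pos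

lemma hasDerivAt_comp_moebZ {Z F : ℂ → ℂ} {c : ℂ}
    (hZ : HasDerivAt Z (F (moebZ γ τ)) (moebZ γ τ))
    (hF : F (moebZ γ τ) = c * jZ γ τ ^ 2 * F τ) :
    HasDerivAt (fun w => Z (moebZ γ w)) (c * F τ) τ := by
  refine (hZ.comp (τ : ℂ) (hasDerivAt_moebZ γ τ)).congr_deriv ?_
  rw [hF]
  field_simp [jZ_ne_zero γ τ]

end MoebiusSL

theorem IsOpen.exists_eqOn_smul_add_of_hasDerivAt {𝕜 G : Type*} [RCLike 𝕜]
    [NormedAddCommGroup G] [NormedSpace 𝕜 G] {s : Set 𝕜} (hs : IsOpen s)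
    (hs' : IsPreconnected s) {f g g' : 𝕜 → G} (c : 𝕜)
    (hf : ∀ z ∈ s, HasDerivAt f (c • g' z) z) (hg : ∀ z ∈ s, HasDerivAt g (g' z) z) :
    ∃ a, s.EqOn f (fun z => c • g z + a) :=
  hs.exists_eq_add_of_deriv_eq hs' (fun z hz => (hf z hz).differentiableAt.differentiableWithinAt)
    (fun z hz => ((hg z hz).const_smul c).differentiableAt.differentiableWithinAt)
    (fun z hz => (hf z hz).deriv.trans ((hg z hz).const_smul c).deriv.symm)

section CrossedHom

variable {G R : Type*} [Monoid G] [Ring R]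

def IsCrossedHom (χ : G →* R) (L : G → R) : Prop :=
  ∀ g h, L (g * h) = χ g * L h + L g

theorem isCrossedHom_of_apply_smul {X : Type*} [MulAction G X] [Nonempty X] {χ : G →* R}
    {f : X → R} {L : G → R} (hf : ∀ g x, f (g • x) = χ g * f x + L g) : IsCrossedHom χ L := by
  intro g h
  obtain ⟨x⟩ := ‹Nonempty X›
  have := hf (g * h) x
  rw [mul_smul, hf, hf, map_mul, mul_add, mul_assoc, add_assoc] at this
  exact (add_left_cancel this).symm

theorem IsCrossedHom.map_mul_of_eq_one {χ : G →* R} {L : G → R} (hL : IsCrossedHom χ L)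
    {g : G} (hg : χ g = 1) (h : G) : L (g * h) = L g + L h := by
  rw [hL, hg, one_mul, add_comm]

end CrossedHom

/-- Let `Z` be the primitive of `(2πi/6)η⁴dz` and `χ` the character of `SL(2,ℤ)`
with `χ(T) = e^{2πi/6}` (so that `η⁴|₂γ = χ(γ)η⁴`).  Then `dZ|₀γ = χ(γ)dZ` for
every `γ ∈ SL(2,ℤ)`; consequently `Z|₀γ = χ(γ)Z + L(γ)` for a map
`L : SL(2,ℤ) → ℂ` satisfying the crossed-homomorphism identity, which restricts
to a group homomorphism on `ker χ` (the commutator subgroup `Γ'(1)`). -/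
theorem eichler_primitive_transformation
    (Z : ℂ → ℂ)
    (hZ : ∀ z : ℂ, 0 < z.im →
        HasDerivAt Z ((2 * (Real.pi : ℂ) * Complex.I / 6) * dedekindEta z ^ 4) z)
    (χ : Matrix.SpecialLinearGroup (Fin 2) ℤ →* ℂ)
    (hη : ∀ γ : Matrix.SpecialLinearGroup (Fin 2) ℤ, ∀ z : ℂ, 0 < z.im →
        dedekindEta (moebZ γ z) ^ 4 = χ γ * jZ γ z ^ 2 * dedekindEta z ^ 4) :
    (∀ γ : Matrix.SpecialLinearGroup (Fin 2) ℤ, ∀ z : ℂ, 0 < z.im →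
        deriv (fun w => Z (moebZ γ w)) z = χ γ * deriv Z z) ∧
    ∃ L : Matrix.SpecialLinearGroup (Fin 2) ℤ → ℂ,
      (∀ γ : Matrix.SpecialLinearGroup (Fin 2) ℤ, ∀ z : ℂ, 0 < z.im →
          Z (moebZ γ z) = χ γ * Z z + L γ) ∧
      (∀ γ₁ γ₂ : Matrix.SpecialLinearGroup (Fin 2) ℤ,
          L (γ₁ * γ₂) = χ γ₁ * L γ₂ + L γ₁) ∧
      (∀ γ₁ γ₂ : Matrix.SpecialLinearGroup (Fin 2) ℤ,
          χ γ₁ = 1 → χ γ₂ = 1 → L (γ₁ * γ₂) = L γ₁ + L γ₂) := by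
  have hZγ : ∀ γ, ∀ z : ℂ, 0 < z.im → HasDerivAt (fun w => Z (moebZ γ w))
      (χ γ * ((2 * (Real.pi : ℂ) * Complex.I / 6) * dedekindEta z ^ 4)) z := fun γ z hz =>
    hasDerivAt_comp_moebZ γ ⟨z, hz⟩ (c := χ γ)
      (F := fun w => (2 * (Real.pi : ℂ) * Complex.I / 6) * dedekindEta w ^ 4)
      (hZ _ (im_moebZ_pos γ ⟨z, hz⟩))
      (by simp only [hη γ z hz]; ring)
  choose L hL using fun γ => isOpen_upperHalfPlaneSet.exists_eqOn_smul_add_of_hasDerivAt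
    (convex_halfSpace_im_gt 0).isPreconnected (χ γ) (hZγ γ) hZ
  have hcross : IsCrossedHom χ L :=
    isCrossedHom_of_apply_smul (f := fun τ : ℍ => Z τ) fun γ τ => by
      simpa [moebZ_coe] using hL γ τ.im_pos
  exact ⟨fun γ z hz => by rw [(hZγ γ z hz).deriv, (hZ z hz).deriv], L, fun γ z hz => hL γ hz,
    hcross, fun γ₁ γ₂ h₁ _ => hcross.map_mul_of_eq_one h₁ γ₂⟩
end
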